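/- Let G be an abelian group and A, A' finite multisets with elements in G. If A ∼₀ A', then FS(A) = FS(A'). -/
import Mathlib

/-- The subset sums multiset: the multiset of sums of all sub-multisets of `A`. -/
def FS {G : Type*} [AddCommGroup G] (A : Multiset G) : Multiset G :=
  A.powerset.map Multiset.sum

/-- `A ∼₀ A'`: `A'` is obtained from `A` by flipping the signs of a zero-sum sub-multiset. -/
def Sim0 {G : Type*} [AddCommGroup G] [DecidableEq G] (A A' : Multiset G) : Prop :=
  ∃ B ≤ A, B.sum = 0 ∧ A' = (A - B) + B.map (fun x => -x)

lemma FS_cons {G : Type*} [AddCommGroup G] (a : G) (s : Multiset G) :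
    FS (a ::ₘ s) = FS s + (FS s).map (a + ·) := by
  simp [FS, Multiset.powerset_cons, Multiset.map_map, Function.comp]

lemma FS_add_congr {G : Type*} [AddCommGroup G] (C : Multiset G) {D D' : Multiset G}
    (h : FS D = FS D') : FS (C + D) = FS (C + D') := by
  induction C using Multiset.induction with
  | empty => simpa using h
  | cons a t ih =>
    rw [Multiset.cons_add, Multiset.cons_add, FS_cons, FS_cons, ih]

lemma powerset_map' {G H : Type*} (f : G → H) (s : Multiset G) :
    (s.map f).powerset = s.powerset.map (Multiset.map f) := by
  induction s using Multiset.induction with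
  | empty => simp
  | cons a t ih =>
    simp [Multiset.powerset_cons, ih, Multiset.map_map, Function.comp]

lemma powerset_sub {G : Type*} [DecidableEq G] (s : Multiset G) :
    s.powerset.map (fun T => s - T) = s.powerset := by
  induction s using Multiset.induction with
  | empty => simp
  | cons a t ih =>
    rw [Multiset.powerset_cons, Multiset.map_add, Multiset.map_map]
    have h1 : Multiset.map (fun T => (a ::ₘ t) - T) t.powerset
        = Multiset.map (Multiset.cons a) (Multiset.map (fun T => t - T) t.powerset) := by
      rw [Multiset.map_map]
      refine Multiset.map_congr rfl ?_
      intro T hT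
      exact Multiset.cons_sub_of_le a (Multiset.mem_powerset.mp hT)
    have h2 : Multiset.map ((fun T => (a ::ₘ t) - T) ∘ Multiset.cons a) t.powerset
        = Multiset.map (fun T => t - T) t.powerset := by
      refine Multiset.map_congr rfl ?_
      intro T hT
      simp [Multiset.sub_cons]
    rw [h1, h2, ih]
    exact add_comm _ _

lemma FS_map_neg {G : Type*} [AddCommGroup G] [DecidableEq G] (B : Multiset G)
    (hB : B.sum = 0) : FS (B.map (fun x => -x)) = FS B := by
  rw [FS, powerset_map', Multiset.map_map]
  have key : Multiset.map (Multiset.sum ∘ Multiset.map fun x => -x) B.powerset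
      = Multiset.map (fun T => Multiset.sum (B - T)) B.powerset := by
    refine Multiset.map_congr rfl ?_
    intro T hT
    have hle : T ≤ B := Multiset.mem_powerset.mp hT
    have hsum : (B - T).sum + T.sum = 0 := by
      rw [← Multiset.sum_add, tsub_add_cancel_of_le hle, hB]
    simp only [Function.comp]
    rw [Multiset.sum_map_neg']
    exact (eq_neg_of_add_eq_zero_left hsum).symm
  rw [key, show (fun T => (B - T).sum) = Multiset.sum ∘ (fun T => B - T) from rfl,
    ← Multiset.map_map, powerset_sub]
  rfl

theorem sim0_implies_FS_eq {G : Type*} [AddCommGroup G] [DecidableEq G] (A A' : Multiset G)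
    (h : Sim0 A A') : FS A = FS A' := by
  obtain ⟨B, hBA, hBsum, hA'⟩ := h
  have hA : A = (A - B) + B := by rw [tsub_add_cancel_of_le hBA]
  rw [hA, hA']
  exact FS_add_congr (A - B) (FS_map_neg B hBsum).symm
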